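/- Let p ∈ ℕ, let Γ = {0,1}^p, let π : Γ → (0,∞) and S : Γ → (0,∞), and let w_A, w_R, w_S : {0,…,p} → [0,1]. For a move type m ∈ {A,R,S}, let m′ denote its paired backward move, where A′ = R, R′ = A, S′ = S. For γ ∈ Γ with N_m(γ) nonempty, define T_m(γ, γ′) = S(γ′)/Σ_{γ̃∈N_m(γ)} S(γ̃) if γ′ ∈ N_m(γ) and T_m(γ, γ′) = 0 otherwise. For γ ≠ γ′ define the pRNS off-diagonal transition probability A(γ, γ′) as the sum over those m ∈ {A,R,S} with γ′ ∈ N_m(γ) and w_m(|γ|) > 0 of w_m(|γ|) T_m(γ, γ′) · min{1, π(γ′) w_{m′}(|γ′|) T_{m′}(γ′, γ) / (π(γ) w_m(|γ|) T_m(γ, γ′))}. Then for all γ ≠ γ′, the detailed balance condition π(γ) A(γ, γ′) = π(γ′) A(γ′, γ) holds. -/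

import Mathlib

/-- The three move types of the pRNS sampler. -/
inductive Move
  | A | R | S
deriving DecidableEq

instance instFintypeMove : Fintype Move :=
  ⟨{.A, .R, .S}, fun m => by cases m <;> simp⟩

/-- The paired backward move: `A′ = R`, `R′ = A`, `S′ = S`. -/
def Move.pair : Move → Move
  | .A => .R
  | .R => .A
  | .S => .S

/-- The size `|γ|` of an inclusion vector: the number of active coordinates. -/
def gsize {p : ℕ} (γ : Fin p → Bool) : ℕ :=
  (Finset.univ.filter fun i => γ i = true).card

open Classical in
/-- The add, remove and swap neighborhoods `N_m(γ)`. -/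
noncomputable def Nmove {p : ℕ} : Move → (Fin p → Bool) → Finset (Fin p → Bool)
  | .A, γ => Finset.univ.filter fun γ' => ∃ j, γ j = false ∧ γ' = Function.update γ j true
  | .R, γ => Finset.univ.filter fun γ' => ∃ j, γ j = true ∧ γ' = Function.update γ j false
  | .S, γ => Finset.univ.filter fun γ' => ∃ j k, γ j = true ∧ γ k = false ∧
      γ' = Function.update (Function.update γ j false) k true

open Classical in
/-- The pRNS proposal transition function restricted to `N_m(γ)`:
`T_m(γ, γ′) = S(γ′)/Σ_{γ̃∈N_m(γ)} S(γ̃)` for `γ′ ∈ N_m(γ)` and `0` otherwise. -/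
noncomputable def Tmove {p : ℕ} (S : (Fin p → Bool) → ℝ) (m : Move)
    (γ γ' : Fin p → Bool) : ℝ :=
  if γ' ∈ Nmove m γ then S γ' / ∑ x ∈ Nmove m γ, S x else 0

open Classical in
/-- The off-diagonal pRNS transition probability `A(γ, γ′)` for `γ ≠ γ′`: the sum over
move types `m` with `γ′ ∈ N_m(γ)` and `w_m(|γ|) > 0` of
`w_m(|γ|) T_m(γ,γ′) min{1, π(γ′) w_{m′}(|γ′|) T_{m′}(γ′,γ) / (π(γ) w_m(|γ|) T_m(γ,γ′))}`. -/
noncomputable def Atrans {p : ℕ} (pr S : (Fin p → Bool) → ℝ) (w : Move → ℕ → ℝ)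
    (γ γ' : Fin p → Bool) : ℝ :=
  ∑ m : Move,
    if γ' ∈ Nmove m γ ∧ 0 < w m (gsize γ) then
      w m (gsize γ) * Tmove S m γ γ' *
        min 1 (pr γ' * (w m.pair (gsize γ') * Tmove S m.pair γ' γ) /
               (pr γ * (w m (gsize γ) * Tmove S m γ γ')))
    else 0

/-!
Multiplying the Metropolis–Hastings term of move `m` by `π(γ)` turns it into
`min (π(γ) w_m(|γ|) T_m(γ,γ′)) (π(γ′) w_{m′}(|γ′|) T_{m′}(γ′,γ))`, which is also the value
(zero) when the move is not proposed. This expression is symmetric under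
`(γ, γ′, m) ↦ (γ′, γ, m′)`, and `m ↦ m′` is a bijection of the move types.
-/

lemma Move.pair_involutive : Function.Involutive Move.pair := by
  intro m
  cases m <;> rfl

lemma mul_min_one_div {K : Type*} [Field K] [LinearOrder K] [IsStrictOrderedRing K]
    {x : K} (hx : 0 < x) (y : K) : x * min 1 (y / x) = min x y := by
  rw [mul_min_of_nonneg _ _ hx.le, mul_one, mul_div_cancel₀ _ hx.ne']

section Flux

variable {p : ℕ} {pr S : (Fin p → Bool) → ℝ} {w : Move → ℕ → ℝ}

lemma Tmove_nonneg (hS : ∀ γ, 0 ≤ S γ) (m : Move) (γ γ' : Fin p → Bool) :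
    0 ≤ Tmove S m γ γ' := by
  unfold Tmove
  split_ifs
  · exact div_nonneg (hS γ') (Finset.sum_nonneg fun x _ => hS x)
  · exact le_rfl

lemma Tmove_pos (hS : ∀ γ, 0 < S γ) {m : Move} {γ γ' : Fin p → Bool}
    (hmem : γ' ∈ Nmove m γ) : 0 < Tmove S m γ γ' := by
  rw [Tmove, if_pos hmem]
  exact div_pos (hS γ') (Finset.sum_pos (fun x _ => hS x) ⟨γ', hmem⟩)

noncomputable def proposalFlux (pr S : (Fin p → Bool) → ℝ) (w : Move → ℕ → ℝ) (m : Move)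
    (γ γ' : Fin p → Bool) : ℝ :=
  pr γ * (w m (gsize γ) * Tmove S m γ γ')

lemma proposalFlux_nonneg (hpr : ∀ γ, 0 ≤ pr γ) (hS : ∀ γ, 0 ≤ S γ)
    (hw0 : ∀ m k, 0 ≤ w m k) (m : Move) (γ γ' : Fin p → Bool) :
    0 ≤ proposalFlux pr S w m γ γ' :=
  mul_nonneg (hpr γ) (mul_nonneg (hw0 _ _) (Tmove_nonneg hS m γ γ'))

lemma pr_mul_Atrans_eq_sum_min (hpr : ∀ γ, 0 < pr γ) (hS : ∀ γ, 0 < S γ)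
    (hw0 : ∀ m k, 0 ≤ w m k) (γ γ' : Fin p → Bool) :
    pr γ * Atrans pr S w γ γ' =
      ∑ m, min (proposalFlux pr S w m γ γ') (proposalFlux pr S w m.pair γ' γ) := by
  rw [Atrans, Finset.mul_sum]
  refine Finset.sum_congr rfl fun m _ => ?_
  split_ifs with hm
  · obtain ⟨hmem, hw⟩ := hm
    have hx : 0 < proposalFlux pr S w m γ γ' :=
      mul_pos (hpr γ) (mul_pos hw (Tmove_pos hS hmem))
    rw [← mul_assoc]
    exact mul_min_one_div hx _
  · have hx : proposalFlux pr S w m γ γ' = 0 := by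
      rcases not_and_or.mp hm with hmem | hw
      · simp [proposalFlux, Tmove, hmem]
      · simp [proposalFlux, le_antisymm (not_lt.mp hw) (hw0 _ _)]
    rw [mul_zero, hx, min_eq_left]
    exact proposalFlux_nonneg (fun γ => (hpr γ).le) (fun γ => (hS γ).le) hw0 _ _ _

end Flux

theorem pRNS_detailed_balance_general {p : ℕ} (pr S : (Fin p → Bool) → ℝ)
    (hpr : ∀ γ, 0 < pr γ) (hS : ∀ γ, 0 < S γ)
    (w : Move → ℕ → ℝ) (hw0 : ∀ m k, 0 ≤ w m k)
    (γ γ' : Fin p → Bool) :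
    pr γ * Atrans pr S w γ γ' = pr γ' * Atrans pr S w γ' γ := by
  rw [pr_mul_Atrans_eq_sum_min hpr hS hw0, pr_mul_Atrans_eq_sum_min hpr hS hw0]
  refine Fintype.sum_bijective Move.pair Move.pair_involutive.bijective _ _ fun m => ?_
  rw [Move.pair_involutive m, min_comm]

/-- Lemma 1: the paired-move reversible neighborhood sampler (pRNS) satisfies the
detailed balance condition `π(γ) A(γ, γ′) = π(γ′) A(γ′, γ)` for all `γ ≠ γ′`. -/
theorem pRNS_detailed_balance {p : ℕ} (pr S : (Fin p → Bool) → ℝ)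
    (hpr : ∀ γ, 0 < pr γ) (hS : ∀ γ, 0 < S γ)
    (w : Move → ℕ → ℝ) (hw0 : ∀ m k, 0 ≤ w m k) (hw1 : ∀ m k, w m k ≤ 1)
    (γ γ' : Fin p → Bool) (h : γ ≠ γ') :
    pr γ * Atrans pr S w γ γ' = pr γ' * Atrans pr S w γ' γ :=
  pRNS_detailed_balance_general pr S hpr hS w hw0 γ γ'
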